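/- Let λ ∈ ℂ*, b ∈ ℂ, θ, h ∈ ℂ, and let v₀ be the highest weight vector of the Verma module V̄(θ,h). Then Ω(λ,b) ⊗ V̄(θ,h) is a cyclic Virasoro module generated by 1 ⊗ v₀: the U(Vir)-submodule generated by 1 ⊗ v₀ is the whole tensor product. -/

import Mathlib

open Polynomial TensorProduct

/-- The Virasoro commutation relations for a family of operators `d i` (the action of the
basis vectors `d_i`) and a central operator `cc` (the action of the central element `c`) on a
complex vector space: `[d_i, d_j] = (j - i) d_{i+j} + δ_{i,-j} (i^3 - i)/12 c` and `c` central. -/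
def VirRep {V : Type*} [AddCommGroup V] [Module ℂ V]
    (d : ℤ → Module.End ℂ V) (cc : Module.End ℂ V) : Prop :=
  (∀ i : ℤ, cc * d i = d i * cc) ∧
    ∀ i j : ℤ, d i * d j - d j * d i =
      ((j : ℂ) - (i : ℂ)) • d (i + j) +
        (if i + j = 0 then ((i : ℂ) ^ 3 - (i : ℂ)) / 12 else 0) • cc

/-- A subspace invariant under the Virasoro action, i.e. a Virasoro submodule. -/
def VirInvariant {V : Type*} [AddCommGroup V] [Module ℂ V]
    (d : ℤ → Module.End ℂ V) (cc : Module.End ℂ V) (p : Submodule ℂ V) : Prop :=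
  (∀ i : ℤ, ∀ v ∈ p, d i v ∈ p) ∧ ∀ v ∈ p, cc v ∈ p

/-- The operator by which `d_n` acts on `Ω(λ, b) = ℂ[∂]`:
`f(∂) ↦ λ^n (∂ + n(b-1)) f(∂ - n)`. The central element acts by `0`. -/
noncomputable def omegaD (lam b : ℂ) (n : ℤ) : Module.End ℂ (Polynomial ℂ) where
  toFun f := lam ^ n • ((X + Polynomial.C ((n : ℂ) * (b - 1))) * f.comp (X - Polynomial.C (n : ℂ)))
  map_add' f g := by simp [add_comp, mul_add, smul_add]
  map_smul' a f := by
    simp only [RingHom.id_apply, smul_comp, mul_smul_comm]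
    rw [smul_comm]

/-- The diagonal action of `d_i` on a tensor product of two Virasoro modules. -/
noncomputable def tensorD {V W : Type*} [AddCommGroup V] [Module ℂ V] [AddCommGroup W]
    [Module ℂ W] (dV : ℤ → Module.End ℂ V) (dW : ℤ → Module.End ℂ W) (i : ℤ) :
    Module.End ℂ (V ⊗[ℂ] W) :=
  LinearMap.rTensor W (dV i) + LinearMap.lTensor V (dW i)

/-- The diagonal action of the central element on a tensor product of two Virasoro modules. -/
noncomputable def tensorC {V W : Type*} [AddCommGroup V] [Module ℂ V] [AddCommGroup W]
    [Module ℂ W] (cV : Module.End ℂ V) (cW : Module.End ℂ W) : Module.End ℂ (V ⊗[ℂ] W) :=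
  LinearMap.rTensor W cV + LinearMap.lTensor V cW

/-!
Since `d₁ v₀ = 0`, we have `d₁ (f ⊗ v₀) = λ (∂ + b - 1) f(∂ - 1) ⊗ v₀`, so the polynomials `f` with
`f ⊗ v₀ ∈ M` form a subspace containing `1` and stable under `f ↦ (∂ + b - 1) f(∂ - 1)`. Iterating
from `1` produces a monic polynomial of every degree, so this subspace is all of `ℂ[∂]`. The vectors
`w` with `ℂ[∂] ⊗ w ⊆ M` then form a Virasoro submodule of `V̄(θ,h)` containing `v₀`, hence
everything, and `M` contains every pure tensor.
-/

namespace Polynomial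

variable {R : Type*} [Ring R] [Nontrivial R]

theorem submodule_eq_top_of_forall_exists_monic {S : Submodule R R[X]}
    (h : ∀ n : ℕ, ∃ g ∈ S, g.Monic ∧ g.natDegree = n) : S = ⊤ := by
  choose g hgS hg hdeg using h
  let seq : Sequence R := ⟨g, fun n => by rw [degree_eq_natDegree (hg n).ne_zero, hdeg n]⟩
  rw [eq_top_iff, ← seq.span fun n => (hg n).leadingCoeff ▸ isUnit_one]
  exact Submodule.span_le.2 (Set.range_subset_iff.2 hgS)

theorem Monic.natDegree_X_add_C_mul_comp_X_sub_C {f : R[X]} (hf : f.Monic) (a c : R) :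
    ((X + C a) * f.comp (X - C c)).natDegree = f.natDegree + 1 := by
  rw [(monic_X_add_C a).natDegree_mul (hf.comp_X_sub_C c), natDegree_X_add_C,
    natDegree_comp_eq_of_mul_ne_zero (by simp [hf.leadingCoeff]), natDegree_X_sub_C, mul_one,
    add_comm]

theorem submodule_eq_top_of_one_mem_of_mul_comp_mem {S : Submodule R R[X]} (a c : R)
    (h1 : 1 ∈ S) (hS : ∀ f ∈ S, (X + C a) * f.comp (X - C c) ∈ S) : S = ⊤ := by
  refine submodule_eq_top_of_forall_exists_monic fun n => ?_
  induction n with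
  | zero => exact ⟨1, h1, monic_one, natDegree_one⟩
  | succ n ih =>
    obtain ⟨g, hgS, hg, rfl⟩ := ih
    exact ⟨_, hS g hgS, (monic_X_add_C a).mul (hg.comp_X_sub_C c),
      hg.natDegree_X_add_C_mul_comp_X_sub_C a c⟩

end Polynomial

namespace Submodule

variable {R U V : Type*} [CommRing R] [AddCommGroup U] [Module R U] [AddCommGroup V] [Module R V]

def tensorRightCore (M : Submodule R (U ⊗[R] V)) : Submodule R V :=
  ⨅ u : U, M.comap (TensorProduct.mk R U V u)

theorem mem_tensorRightCore {M : Submodule R (U ⊗[R] V)} {w : V} :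
    w ∈ M.tensorRightCore ↔ ∀ u : U, u ⊗ₜ[R] w ∈ M := by
  simp [tensorRightCore, mem_iInf]

theorem eq_top_of_tensorRightCore_eq_top {M : Submodule R (U ⊗[R] V)}
    (hM : M.tensorRightCore = ⊤) : M = ⊤ := by
  rw [eq_top_iff, ← TensorProduct.span_tmul_eq_top, span_le]
  rintro _ ⟨u, w, rfl⟩
  exact mem_tensorRightCore.1 (hM ▸ mem_top) u

end Submodule

section TensorAction

variable {U V : Type*} [AddCommGroup U] [Module ℂ U] [AddCommGroup V] [Module ℂ V]

@[simp]
theorem tensorD_tmul (dU : ℤ → Module.End ℂ U) (dV : ℤ → Module.End ℂ V) (i : ℤ) (u : U)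
    (v : V) :
    tensorD dU dV i (u ⊗ₜ v) = dU i u ⊗ₜ v + u ⊗ₜ dV i v := rfl

@[simp]
theorem tensorC_tmul (cU : Module.End ℂ U) (cV : Module.End ℂ V) (u : U) (v : V) :
    tensorC cU cV (u ⊗ₜ v) = cU u ⊗ₜ v + u ⊗ₜ cV v := rfl

theorem virInvariant_tensorRightCore {dU : ℤ → Module.End ℂ U} {dV : ℤ → Module.End ℂ V}
    {cU : Module.End ℂ U} {cV : Module.End ℂ V} {M : Submodule ℂ (U ⊗[ℂ] V)}
    (hM : VirInvariant (tensorD dU dV) (tensorC cU cV) M) :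
    VirInvariant dV cV M.tensorRightCore := by
  simp only [VirInvariant, Submodule.mem_tensorRightCore]
  refine ⟨fun i w hw u => ?_, fun w hw u => ?_⟩
  · have := hM.1 i _ (hw u)
    rwa [tensorD_tmul, Submodule.add_mem_iff_right _ (hw _)] at this
  · have := hM.2 _ (hw u)
    rwa [tensorC_tmul, Submodule.add_mem_iff_right _ (hw _)] at this

end TensorAction

theorem omegaD_one (lam b : ℂ) (f : ℂ[X]) :
    omegaD lam b 1 f = lam • ((X + C (b - 1)) * f.comp (X - C 1)) := by
  simp [omegaD]

theorem tensor_with_verma_cyclic_general {V : Type*} [AddCommGroup V] [Module ℂ V]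
    (lam b : ℂ) (hlam : lam ≠ 0)
    (d : ℤ → Module.End ℂ V) (cV : Module.End ℂ V)
    (v0 : V)
    (hup : ∀ k : ℤ, 0 < k → d k v0 = 0)
    (hcyc : ∀ p : Submodule ℂ V, VirInvariant d cV p → v0 ∈ p → p = ⊤)
    (M : Submodule ℂ (Polynomial ℂ ⊗[ℂ] V))
    (hM : VirInvariant (tensorD (omegaD lam b) d) (tensorC 0 cV) M)
    (h1 : (1 : Polynomial ℂ) ⊗ₜ[ℂ] v0 ∈ M) :
    M = ⊤ := by
  have hpoly : M.comap ((TensorProduct.mk ℂ ℂ[X] V).flip v0) = ⊤ := by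
    refine submodule_eq_top_of_one_mem_of_mul_comp_mem (b - 1) 1 h1
      fun f (hf : f ⊗ₜ v0 ∈ M) => show _ ⊗ₜ v0 ∈ M from ?_
    have := M.smul_mem lam⁻¹ (hM.1 1 _ hf)
    rwa [tensorD_tmul, hup 1 one_pos, tmul_zero, add_zero, omegaD_one, smul_tmul', smul_smul,
      inv_mul_cancel₀ hlam, one_smul] at this
  refine Submodule.eq_top_of_tensorRightCore_eq_top (hcyc _ (virInvariant_tensorRightCore hM) ?_)
  exact Submodule.mem_tensorRightCore.2 fun f => Submodule.eq_top_iff'.1 hpoly f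

/-- `Ω(λ,b) ⊗ V̄(θ,h)` is cyclic, generated by `1 ⊗ v₀` where `v₀` is the
highest weight vector: every Virasoro submodule containing `1 ⊗ v₀` is everything. -/
theorem tensor_with_verma_cyclic {V : Type*} [AddCommGroup V] [Module ℂ V]
    (lam b th h : ℂ) (hlam : lam ≠ 0)
    (d : ℤ → Module.End ℂ V) (cV : Module.End ℂ V) (hrep : VirRep d cV)
    (v0 : V) (hv0 : v0 ≠ 0)
    (hup : ∀ k : ℤ, 0 < k → d k v0 = 0) (h0 : d 0 v0 = h • v0) (hc : cV v0 = th • v0)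
    (hcyc : ∀ p : Submodule ℂ V, VirInvariant d cV p → v0 ∈ p → p = ⊤)
    (M : Submodule ℂ (Polynomial ℂ ⊗[ℂ] V))
    (hM : VirInvariant (tensorD (omegaD lam b) d) (tensorC 0 cV) M)
    (h1 : (1 : Polynomial ℂ) ⊗ₜ[ℂ] v0 ∈ M) :
    M = ⊤ :=
  tensor_with_verma_cyclic_general lam b hlam d cV v0 hup hcyc M hM h1
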